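/- arXiv:1506.04328 — 7 statements merged into one kernel-verified Lean document; each statement's English description precedes it below -/
import Mathlib

section
/- Let M be a connected noncompact smooth manifold and let S ⋐ M be a relatively compact subset. Then the number of connected components of M \ S that are not relatively compact in M is at most the number of connected components of M \ T for any set T with S ⊂ T ⋐ M. -/
/-- For a connected noncompact manifold `M` and relatively compact
subsets `S ⊆ T ⋐ M`, the number of connected components of `M \ S` that are not
relatively compact in `M` is at most the number of connected components of `M \ T`. -/
theorem stmt_0 {n : ℕ} {M : Type} [TopologicalSpace M] [T2Space M]
    [ChartedSpace (EuclideanSpace ℝ (Fin n)) M]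
    [ConnectedSpace M] [NoncompactSpace M]
    {S T : Set M} (hST : S ⊆ T) (hS : IsCompact (closure S))
    (hT : IsCompact (closure T)) :
    Cardinal.mk {C : Set M //
        (∃ x ∈ Sᶜ, C = connectedComponentIn Sᶜ x) ∧ ¬ IsCompact (closure C)} ≤
      Cardinal.mk {C : Set M // ∃ x ∈ Tᶜ, C = connectedComponentIn Tᶜ x} := by
  classical
  -- For each non-relatively-compact component, pick a point outside `closure T`.
  have key : ∀ p : {C : Set M //
      (∃ x ∈ Sᶜ, C = connectedComponentIn Sᶜ x) ∧ ¬ IsCompact (closure C)},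
      ∃ x, x ∈ p.1 ∧ x ∉ closure T := by
    intro ⟨C, ⟨hx, hnc⟩⟩
    by_contra h
    push_neg at h
    exact hnc (hT.of_isClosed_subset isClosed_closure
      (closure_minimal h isClosed_closure))
  choose pt hpt hptT using key
  have hptTc : ∀ p, pt p ∈ Tᶜ := fun p => fun h => hptT p (subset_closure h)
  have hTcSc : Tᶜ ⊆ Sᶜ := Set.compl_subset_compl.mpr hST
  -- component of the chosen point
  have hmemS : ∀ p, pt p ∈ Sᶜ := fun p => hTcSc (hptTc p)
  have hcomp : ∀ p, p.1 = connectedComponentIn Sᶜ (pt p) := by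
    intro p
    obtain ⟨⟨x, hxS, hC⟩, _⟩ := p.2
    have : pt p ∈ connectedComponentIn Sᶜ x := hC ▸ hpt p
    rw [hC, connectedComponentIn_eq this]
  refine Cardinal.mk_le_of_injective (f := fun p =>
    ⟨connectedComponentIn Tᶜ (pt p), pt p, hptTc p, rfl⟩) ?_
  intro p q hpq
  have hD : connectedComponentIn Tᶜ (pt p) = connectedComponentIn Tᶜ (pt q) :=
    congrArg Subtype.val hpq
  -- the T-component is a connected subset of Sᶜ containing both points
  have hpre : IsPreconnected (connectedComponentIn Tᶜ (pt p)) :=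
    isPreconnected_connectedComponentIn
  have hsub : connectedComponentIn Tᶜ (pt p) ⊆ Sᶜ :=
    (connectedComponentIn_subset _ _).trans hTcSc
  have hp' : pt p ∈ connectedComponentIn Tᶜ (pt p) :=
    mem_connectedComponentIn (hptTc p)
  have hq' : pt q ∈ connectedComponentIn Tᶜ (pt p) := by
    rw [hD]; exact mem_connectedComponentIn (hptTc q)
  have hle : connectedComponentIn Tᶜ (pt p) ⊆ connectedComponentIn Sᶜ (pt p) :=
    hpre.subset_connectedComponentIn hp' hsub
  have : pt q ∈ connectedComponentIn Sᶜ (pt p) := hle hq'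
  have heq : connectedComponentIn Sᶜ (pt p) = connectedComponentIn Sᶜ (pt q) :=
    connectedComponentIn_eq this
  exact Subtype.ext (by rw [hcomp p, hcomp q, heq])
end

section
/- Let M be a connected noncompact manifold, and let Ω and Θ be domains in M with Θ ⊆ Ω. If M \ Ω has no compact connected components and Ω \ Θ has no compact connected components, then M \ Θ has no compact connected components. -/
/-- If `Θ ⊆ Ω` are domains in a connected noncompact manifold `M`, and
neither `M \ Ω` nor `Ω \ Θ` has a compact connected component, then `M \ Θ` has no
compact connected components. -/
theorem stmt_2 {n : ℕ} {M : Type} [TopologicalSpace M] [T2Space M]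
    [ChartedSpace (EuclideanSpace ℝ (Fin n)) M]
    [ConnectedSpace M] [NoncompactSpace M]
    {Ω Θ : Set M} (hΩo : IsOpen Ω) (hΩc : IsConnected Ω)
    (hΘo : IsOpen Θ) (hΘc : IsConnected Θ) (hΘΩ : Θ ⊆ Ω)
    (h1 : ∀ x ∈ Ωᶜ, ¬ IsCompact (connectedComponentIn Ωᶜ x))
    (h2 : ∀ x ∈ Ω \ Θ, ¬ IsCompact (connectedComponentIn (Ω \ Θ) x)) :
    ∀ x ∈ Θᶜ, ¬ IsCompact (connectedComponentIn Θᶜ x) := by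
  intro x hx hC
  set C := connectedComponentIn Θᶜ x with hCdef
  have hΩcsub : Ωᶜ ⊆ Θᶜ := Set.compl_subset_compl.mpr hΘΩ
  have hCconn : IsConnected C := isConnected_connectedComponentIn_iff.mpr hx
  -- any point of C lying in Ωᶜ gives a compact component of Ωᶜ, contradiction with h1
  have key : ∀ y ∈ Ωᶜ, y ∈ C → False := by
    intro y hyΩ hyC
    set D := connectedComponentIn Ωᶜ y with hDdef
    have hDconn : IsConnected D := isConnected_connectedComponentIn_iff.mpr hyΩ
    have hDclosed : IsClosed D := by
      refine isClosed_of_closure_subset ?_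
      refine hDconn.isPreconnected.closure.subset_connectedComponentIn
        (subset_closure (mem_connectedComponentIn hyΩ)) ?_
      calc closure D ⊆ closure Ωᶜ := closure_mono (connectedComponentIn_subset _ _)
        _ = Ωᶜ := hΩo.isClosed_compl.closure_eq
    have hDsubC : D ⊆ C := by
      rw [hCdef, connectedComponentIn_eq hyC]
      exact hDconn.isPreconnected.subset_connectedComponentIn
        (mem_connectedComponentIn hyΩ) ((connectedComponentIn_subset _ _).trans hΩcsub)
    exact h1 y hyΩ (hC.of_isClosed_subset hDclosed hDsubC)
  by_cases hxΩ : x ∈ Ω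
  · -- x ∈ Ω \ Θ
    have hxd : x ∈ Ω \ Θ := ⟨hxΩ, hx⟩
    set C' := connectedComponentIn (Ω \ Θ) x with hC'def
    have hC'conn : IsConnected C' := isConnected_connectedComponentIn_iff.mpr hxd
    have hclC'subC : closure C' ⊆ C := by
      refine hC'conn.isPreconnected.closure.subset_connectedComponentIn
        (subset_closure (mem_connectedComponentIn hxd)) ?_
      calc closure C' ⊆ closure Θᶜ :=
            closure_mono ((connectedComponentIn_subset _ _).trans fun y hy => hy.2)
        _ = Θᶜ := hΘo.isClosed_compl.closure_eq
    by_cases hmeet : ∃ y ∈ closure C', y ∈ Ωᶜ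
    · obtain ⟨y, hyc, hyΩ⟩ := hmeet
      exact key y hyΩ (hclC'subC hyc)
    · push_neg at hmeet
      have hclsub : closure C' ⊆ Ω \ Θ := fun y hy =>
        ⟨not_not.mp (hmeet y hy), connectedComponentIn_subset _ _ (hclC'subC hy)⟩
      have hC'closed : IsClosed C' := by
        refine isClosed_of_closure_subset ?_
        exact hC'conn.isPreconnected.closure.subset_connectedComponentIn
          (subset_closure (mem_connectedComponentIn hxd)) hclsub
      have hC'subC : C' ⊆ C := subset_closure.trans hclC'subC
      exact h2 x hxd (hC.of_isClosed_subset hC'closed hC'subC)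
  · exact key x hxΩ (mem_connectedComponentIn hx)
end

section
/- Let M be a connected noncompact manifold, Φ : M → S a proper surjective continuous open map onto a topological surface S, K ⊂ S a compact set such that S \ K has no relatively compact connected components, and V a connected component of M \ Φ⁻¹(K). Then Φ(V) is a connected component of S \ K. -/
/-- Let `Φ : M → S` be a proper surjective continuous open map from a
connected noncompact manifold onto a topological surface `S`, let `K ⊆ S` be compact with
`S \ K` having no relatively compact connected components, and let `V` be a connected
component of `M \ Φ⁻¹(K)`.  Then `Φ(V)` is a connected component of `S \ K`. -/
theorem stmt_3 {n : ℕ} {M S : Type} [TopologicalSpace M] [T2Space M]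
    [ChartedSpace (EuclideanSpace ℝ (Fin n)) M] [ConnectedSpace M] [NoncompactSpace M]
    [TopologicalSpace S] [T2Space S] [ChartedSpace (EuclideanSpace ℝ (Fin 2)) S]
    [ConnectedSpace S]
    {Φ : M → S} (hcont : Continuous Φ) (hprop : ∀ C : Set S, IsCompact C → IsCompact (Φ ⁻¹' C))
    (hopen : IsOpenMap Φ) (hsurj : Function.Surjective Φ)
    {K : Set S} (hK : IsCompact K)
    (hKnc : ∀ y ∈ Kᶜ, ¬ IsCompact (closure (connectedComponentIn Kᶜ y)))
    {V : Set M} (hV : ∃ x ∈ (Φ ⁻¹' K)ᶜ, V = connectedComponentIn (Φ ⁻¹' K)ᶜ x) :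
    ∃ y ∈ Kᶜ, Φ '' V = connectedComponentIn Kᶜ y := by
  haveI : LocallyConnectedSpace M :=
    ChartedSpace.locallyConnectedSpace (EuclideanSpace ℝ (Fin n)) M
  haveI : LocallyCompactSpace S :=
    ChartedSpace.locallyCompactSpace (EuclideanSpace ℝ (Fin 2)) S
  obtain ⟨x, hx, rfl⟩ := hV
  set U : Set M := (Φ ⁻¹' K)ᶜ with hU
  set V : Set M := connectedComponentIn U x with hVdef
  have hUopen : IsOpen U := (hK.isClosed.preimage hcont).isOpen_compl
  have hVopen : IsOpen V := hUopen.connectedComponentIn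
  have hxV : x ∈ V := mem_connectedComponentIn hx
  have hVsub : V ⊆ U := connectedComponentIn_subset U x
  have hVconn : IsConnected V := isConnected_connectedComponentIn_iff.mpr hx
  have hΦx : Φ x ∈ Kᶜ := hx
  refine ⟨Φ x, hΦx, ?_⟩
  have himgsub : Φ '' V ⊆ Kᶜ := by
    rintro _ ⟨z, hz, rfl⟩; exact hVsub hz
  have himgconn : IsConnected (Φ '' V) := hVconn.image Φ hcont.continuousOn
  -- one inclusion
  have h1 : Φ '' V ⊆ connectedComponentIn Kᶜ (Φ x) :=
    himgconn.isPreconnected.subset_connectedComponentIn ⟨x, hxV, rfl⟩ himgsub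
  -- proper map is closed
  have hproper : IsProperMap Φ :=
    isProperMap_iff_isCompact_preimage.mpr ⟨hcont, fun {C} hC => hprop C hC⟩
  have hclosed : IsClosedMap Φ := hproper.isClosedMap
  -- closure V ∩ U ⊆ V
  have hclV : closure V ∩ U ⊆ V := by
    intro z ⟨hz1, hz2⟩
    have hWopen : IsOpen (connectedComponentIn U z) := hUopen.connectedComponentIn
    have hzW : z ∈ connectedComponentIn U z := mem_connectedComponentIn hz2
    obtain ⟨w, hwW, hwV⟩ := mem_closure_iff.mp hz1 _ hWopen hzW
    have e1 : connectedComponentIn U z = connectedComponentIn U w :=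
      connectedComponentIn_eq hwW
    have e2 : V = connectedComponentIn U w := connectedComponentIn_eq hwV
    show z ∈ V
    rw [e2, ← e1]
    exact hzW
  -- hence Φ '' V is closed in Kᶜ
  have hkey : closure (Φ '' V) ∩ Kᶜ ⊆ Φ '' V := by
    intro y ⟨hy1, hy2⟩
    have : y ∈ Φ '' closure V := hclosed.closure_image_subset V hy1
    obtain ⟨z, hz, rfl⟩ := this
    have hzU : z ∈ U := hy2
    exact ⟨z, hclV ⟨hz, hzU⟩, rfl⟩
  -- reverse inclusion
  have h2 : connectedComponentIn Kᶜ (Φ x) ⊆ Φ '' V := by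
    have hCconn : IsPreconnected (connectedComponentIn Kᶜ (Φ x)) :=
      isPreconnected_connectedComponentIn
    refine hCconn.subset_left_of_subset_union (hopen V hVopen)
      (isClosed_closure (s := Φ '' V)).isOpen_compl ?_ ?_ ?_
    · exact disjoint_compl_right.mono_left subset_closure
    · intro y hy
      by_cases hyc : y ∈ closure (Φ '' V)
      · exact Or.inl (hkey ⟨hyc, connectedComponentIn_subset _ _ hy⟩)
      · exact Or.inr hyc
    · exact ⟨Φ x, h1 ⟨x, hxV, rfl⟩, ⟨x, hxV, rfl⟩⟩
  exact Set.Subset.antisymm h1 h2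
end

section
/- If a connected noncompact manifold M admits a proper surjective continuous open map Φ onto a connected topological surface S, and M has exactly one end, then S has exactly one end. -/
open Set

lemma closure_ccIn_subset {X : Type} [TopologicalSpace X] [LocallyConnectedSpace X]
    {K : Set X} (hK : IsClosed K) (x : X) :
    closure (connectedComponentIn Kᶜ x) ⊆ connectedComponentIn Kᶜ x ∪ K := by
  intro y hy
  by_cases hyK : y ∈ K
  · exact Or.inr hyK
  · left
    have hopen : IsOpen (connectedComponentIn Kᶜ y) := hK.isOpen_compl.connectedComponentIn
    obtain ⟨z, hz1, hz2⟩ := mem_closure_iff.mp hy _ hopen (mem_connectedComponentIn hyK)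
    have h1 : connectedComponentIn Kᶜ y = connectedComponentIn Kᶜ z := connectedComponentIn_eq hz1
    have h2 : connectedComponentIn Kᶜ x = connectedComponentIn Kᶜ z := connectedComponentIn_eq hz2
    rw [h2, ← h1]
    exact mem_connectedComponentIn hyK

lemma compl_end_compact {X : Type} [TopologicalSpace X] [T2Space X] [LocallyCompactSpace X]
    [LocallyConnectedSpace X] [ConnectedSpace X] {K : Set X} (hK : IsCompact K)
    {x₀ : X} (hx₀ : x₀ ∈ Kᶜ)
    (huniq : ∀ y ∈ Kᶜ, ¬ IsCompact (closure (connectedComponentIn Kᶜ y)) →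
      connectedComponentIn Kᶜ y = connectedComponentIn Kᶜ x₀) :
    IsCompact (connectedComponentIn Kᶜ x₀)ᶜ := by
  set C := connectedComponentIn Kᶜ x₀ with hCdef
  obtain ⟨L, hL, hKL⟩ := exists_compact_superset hK
  set F := L \ interior L with hFdef
  have hF : IsCompact F := hL.diff isOpen_interior
  have hopenKc : IsOpen Kᶜ := hK.isClosed.isOpen_compl
  have hFK : F ⊆ Kᶜ := fun y hy hyK => hy.2 (hKL hyK)
  -- finite subcover of F by components of Kᶜ
  obtain ⟨t, ht⟩ := hF.elim_finite_subcover
    (fun y : F => connectedComponentIn Kᶜ (y : X))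
    (fun y => hopenKc.connectedComponentIn)
    (fun y hy => mem_iUnion.2 ⟨⟨y, hy⟩, mem_connectedComponentIn (hFK hy)⟩)
  classical
  set E : F → Set X := fun y =>
    if connectedComponentIn Kᶜ (y : X) = C then ∅ else closure (connectedComponentIn Kᶜ (y : X))
    with hEdef
  have hEcomp : ∀ y : F, IsCompact (E y) := by
    intro y
    by_cases h : connectedComponentIn Kᶜ (y : X) = C
    · simp [hEdef, h]
    · have := mt (huniq (y : X) (hFK y.2)) (by simpa using h)
      simpa [hEdef, h] using not_not.mp this
  have hT : IsCompact (L ∪ ⋃ y ∈ t, E y) :=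
    hL.union (t.isCompact_biUnion fun y _ => hEcomp y)
  refine hT.of_isClosed_subset (isClosed_compl_iff.mpr hopenKc.connectedComponentIn) ?_
  intro z hz
  by_cases hzL : z ∈ L
  · exact Or.inl hzL
  have hzK : z ∈ Kᶜ := fun h => hzL (interior_subset (hKL h))
  set w := connectedComponentIn Kᶜ z with hwdef
  have hzw : z ∈ w := mem_connectedComponentIn hzK
  have hwC : w ≠ C := fun h => hz (h ▸ hzw)
  -- w meets interior L
  have hint : (w ∩ interior L).Nonempty := by
    by_cases hclK : (closure w ∩ K).Nonempty
    · obtain ⟨p, hp1, hp2⟩ := hclK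
      obtain ⟨q, hq1, hq2⟩ := mem_closure_iff.mp hp1 _ isOpen_interior (hKL hp2)
      exact ⟨q, hq2, hq1⟩
    · exfalso
      have hclsub : closure w ⊆ w := by
        intro p hp
        rcases closure_ccIn_subset hK.isClosed z hp with h | h
        · exact h
        · exact absurd ⟨p, hp, h⟩ hclK
      have hclopen : IsClopen w :=
        ⟨closure_subset_iff_isClosed.mp hclsub, hopenKc.connectedComponentIn⟩
      have hwuniv : w = univ := hclopen.eq_univ ⟨z, hzw⟩
      have hKempty : K = ∅ := by
        have : Kᶜ = univ := eq_univ_of_subset (connectedComponentIn_subset _ _) hwuniv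
        simpa using congrArg compl this
      apply hwC
      rw [hwdef, hCdef, hKempty, compl_empty, connectedComponentIn_univ,
        connectedComponentIn_univ, PreconnectedSpace.connectedComponent_eq_univ,
        PreconnectedSpace.connectedComponent_eq_univ]
  -- w meets F
  have hwF : (w ∩ F).Nonempty := by
    by_contra hwF
    have hsub : w ⊆ interior L ∪ Lᶜ := by
      intro p hp
      by_cases h1 : p ∈ L
      · by_cases h2 : p ∈ interior L
        · exact Or.inl h2
        · exact absurd ⟨p, hp, h1, h2⟩ hwF
      · exact Or.inr h1
    have hdisj : Disjoint (interior L) Lᶜ :=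
      disjoint_compl_right.mono_left interior_subset
    rcases isPreconnected_connectedComponentIn.subset_or_subset isOpen_interior
        hL.isClosed.isOpen_compl hdisj hsub with h | h
    · exact hzL (interior_subset (h hzw))
    · obtain ⟨q, hq1, hq2⟩ := hint
      exact (h hq1) (interior_subset hq2)
  obtain ⟨y', hy'w, hy'F⟩ := hwF
  obtain ⟨y, hyt, hy⟩ := mem_iUnion₂.mp (ht hy'F)
  have h1 : connectedComponentIn Kᶜ (y : X) = connectedComponentIn Kᶜ y' :=
    connectedComponentIn_eq hy
  have h2 : w = connectedComponentIn Kᶜ y' := connectedComponentIn_eq hy'w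
  have hyw : connectedComponentIn Kᶜ (y : X) = w := h1.trans h2.symm
  refine Or.inr (mem_biUnion hyt ?_)
  have hEy : E y = closure w := by
    rw [hEdef]; simp only [hyw, if_neg hwC]
  rw [hEy]
  exact subset_closure hzw
/-- A connected noncompact manifold has exactly one end iff for every compact set `K`
there is exactly one connected component of the complement of `K` with noncompact
closure. -/
def HasOneEnd (M : Type) [TopologicalSpace M] : Prop :=
  ∀ K : Set M, IsCompact K →
    ∃! C : Set M, (∃ x ∈ Kᶜ, C = connectedComponentIn Kᶜ x) ∧ ¬ IsCompact (closure C)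

/-- If a connected noncompact manifold `M` admits a proper surjective
continuous open map `Φ` onto a connected topological surface `S`, and `M` has exactly one
end, then `S` has exactly one end. -/
theorem stmt_4 {n : ℕ} {M S : Type} [TopologicalSpace M] [T2Space M]
    [ChartedSpace (EuclideanSpace ℝ (Fin n)) M] [ConnectedSpace M] [NoncompactSpace M]
    [TopologicalSpace S] [T2Space S] [ChartedSpace (EuclideanSpace ℝ (Fin 2)) S]
    [ConnectedSpace S]
    {Φ : M → S} (hcont : Continuous Φ)
    (hprop : ∀ C : Set S, IsCompact C → IsCompact (Φ ⁻¹' C))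
    (hopen : IsOpenMap Φ) (hsurj : Function.Surjective Φ)
    (hM : HasOneEnd M) : HasOneEnd S := by
  haveI : LocallyCompactSpace M :=
    ChartedSpace.locallyCompactSpace (EuclideanSpace ℝ (Fin n)) M
  haveI : LocallyConnectedSpace M :=
    ChartedSpace.locallyConnectedSpace (EuclideanSpace ℝ (Fin n)) M
  intro K hK
  set K' := Φ ⁻¹' K with hK'def
  have hK' : IsCompact K' := hprop K hK
  obtain ⟨C, ⟨⟨x₀, hx₀, hCeq⟩, hCnc⟩, hCuniq⟩ := hM K' hK'
  set C₀ := connectedComponentIn K'ᶜ x₀ with hC₀def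
  have hCnc' : ¬ IsCompact (closure C₀) := hCeq ▸ hCnc
  have huniq : ∀ y ∈ K'ᶜ, ¬ IsCompact (closure (connectedComponentIn K'ᶜ y)) →
      connectedComponentIn K'ᶜ y = C₀ := fun y hy hnc =>
    (hCuniq _ ⟨⟨y, hy, rfl⟩, hnc⟩).trans hCeq
  have hcompl : IsCompact C₀ᶜ := compl_end_compact hK' hx₀ huniq
  have hΦx₀ : Φ x₀ ∈ Kᶜ := hx₀
  have hΦC : Φ '' C₀ ⊆ connectedComponentIn Kᶜ (Φ x₀) := by
    refine (isPreconnected_connectedComponentIn.image Φ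
      hcont.continuousOn).subset_connectedComponentIn
      ⟨x₀, mem_connectedComponentIn hx₀, rfl⟩ ?_
    rintro s ⟨m, hm, rfl⟩
    have h' : m ∈ K'ᶜ := connectedComponentIn_subset K'ᶜ x₀ hm
    exact h'
  refine ⟨connectedComponentIn Kᶜ (Φ x₀), ⟨⟨Φ x₀, hΦx₀, rfl⟩, ?_⟩, ?_⟩
  · intro hc
    have h1 : IsCompact (Φ ⁻¹' closure (connectedComponentIn Kᶜ (Φ x₀))) := hprop _ hc
    have h2 : closure C₀ ⊆ Φ ⁻¹' closure (connectedComponentIn Kᶜ (Φ x₀)) :=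
      closure_minimal (fun m hm => subset_closure (hΦC ⟨m, hm, rfl⟩))
        (isClosed_closure.preimage hcont)
    exact hCnc' (h1.of_isClosed_subset isClosed_closure h2)
  · rintro D ⟨⟨y, hy, hDeq⟩, hDnc⟩
    have hmeet : (D ∩ Φ '' C₀).Nonempty := by
      by_contra h
      rw [Set.not_nonempty_iff_eq_empty] at h
      have hsub : Φ ⁻¹' D ⊆ C₀ᶜ := by
        intro m hm hmC
        have hmem : Φ m ∈ D ∩ Φ '' C₀ := ⟨hm, ⟨m, hmC, rfl⟩⟩
        rw [h] at hmem
        exact hmem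
      have hDc : IsCompact (Φ '' C₀ᶜ) := hcompl.image hcont
      have hsub2 : D ⊆ Φ '' C₀ᶜ := by
        intro s hs
        obtain ⟨m, rfl⟩ := hsurj s
        exact ⟨m, hsub hs, rfl⟩
      exact hDnc (hDc.of_isClosed_subset isClosed_closure
        (closure_minimal hsub2 hDc.isClosed))
    obtain ⟨s, hsD, m, hmC, rfl⟩ := hmeet
    have h1 : D = connectedComponentIn Kᶜ (Φ m) := by
      rw [hDeq]
      exact connectedComponentIn_eq (hDeq ▸ hsD)
    have h3 : connectedComponentIn Kᶜ (Φ x₀) = connectedComponentIn Kᶜ (Φ m) :=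
      connectedComponentIn_eq (hΦC ⟨m, hmC, rfl⟩)
    rw [h1, h3]
end

section
/- Let {Δ(ζ_ν; R_ν)}_{ν≥0} be a locally finite sequence of pairwise disjoint open disks in ℂ. Then there exists a sequence of radii r_ν ∈ (0, R_ν) for ν ≥ 1 such that Σ_{ν=1}^∞ [log(R₀⁻¹ R_ν⁻¹ (|ζ_ν − ζ₀| + R₀)(|ζ_ν − ζ₀| + R_ν))] / [log(R₀⁻¹ r_ν⁻¹ (|ζ_ν − ζ₀| + R₀)(|ζ_ν − ζ₀| − r_ν))] < 1. -/
/-!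
Disjointness of the disks gives `|ζ_ν - ζ₀| ≥ R_ν + R₀ > 0`, so every numerator is the logarithm
of a number `≥ 1`, while the denominator tends to `+∞` as `r_ν → 0⁺`. Choosing `r_ν` so small that
the `ν`-th denominator exceeds `2^(ν+1)` times its numerator bounds the series by
`∑_{ν ≥ 1} 2^-(ν+1) = 1/2`.
-/

open Metric Filter Topology Set

lemma log_inv_mul_inv_mul_add_mul_add_nonneg {R₀ R d : ℝ} (hR₀ : 0 < R₀) (hR : 0 < R)
    (hd : 0 ≤ d) : 0 ≤ Real.log (R₀⁻¹ * R⁻¹ * (d + R₀) * (d + R)) := by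
  apply Real.log_nonneg
  have h₀ : 1 ≤ R₀⁻¹ * (d + R₀) := by rw [inv_mul_eq_div, le_div_iff₀ hR₀]; linarith
  have h : 1 ≤ R⁻¹ * (d + R) := by rw [inv_mul_eq_div, le_div_iff₀ hR]; linarith
  calc (1 : ℝ) ≤ (R₀⁻¹ * (d + R₀)) * (R⁻¹ * (d + R)) := one_le_mul_of_one_le_of_one_le h₀ h
    _ = R₀⁻¹ * R⁻¹ * (d + R₀) * (d + R) := by ring

lemma tendsto_log_inv_mul_inv_mul_add_mul_sub {R₀ d : ℝ} (hR₀ : 0 < R₀) (hd : 0 < d) :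
    Tendsto (fun r => Real.log (R₀⁻¹ * r⁻¹ * (d + R₀) * (d - r))) (𝓝[>] 0) atTop := by
  have hlim : Tendsto (fun r => R₀⁻¹ * (d + R₀) * (d - r)) (𝓝[>] 0)
      (𝓝 (R₀⁻¹ * (d + R₀) * d)) := by
    have hcont : Continuous fun r : ℝ => R₀⁻¹ * (d + R₀) * (d - r) := by fun_prop
    simpa using (hcont.tendsto 0).mono_left nhdsWithin_le_nhds
  refine (Real.tendsto_log_atTop.comp
    (tendsto_inv_nhdsGT_zero.atTop_mul_pos (by positivity) hlim)).congr fun r => ?_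
  simp only [Function.comp_apply]
  ring_nf

lemma exists_mem_Ioo_lt_log_inv_mul_inv_mul_add_mul_sub {R₀ R d : ℝ} (hR₀ : 0 < R₀)
    (hR : 0 < R) (hd : 0 < d) (c : ℝ) :
    ∃ r ∈ Ioo 0 R, c < Real.log (R₀⁻¹ * r⁻¹ * (d + R₀) * (d - r)) :=
  (((tendsto_log_inv_mul_inv_mul_add_mul_sub hR₀ hd).eventually_gt_atTop c).and
    (Ioo_mem_nhdsGT hR)).exists.imp fun _ h => ⟨h.2, h.1⟩

lemma summable_div_and_tsum_div_lt_one {a b : ℕ → ℝ} (ha : ∀ n, 0 ≤ a n)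
    (hab : ∀ n, 2 ^ (n + 2) * a n < b n) :
    Summable (fun n => a n / b n) ∧ ∑' n, a n / b n < 1 := by
  have hb : ∀ n, 0 < b n := fun n => (mul_nonneg (by positivity) (ha n)).trans_lt (hab n)
  have hbound : ∀ n, a n / b n ≤ 1 / 2 / 2 / 2 ^ n := fun n => by
    rw [div_le_iff₀ (hb n)]
    calc a n = 1 / 2 / 2 / 2 ^ n * (2 ^ (n + 2) * a n) := by field_simp; ring
      _ ≤ 1 / 2 / 2 / 2 ^ n * b n := by gcongr; exact (hab n).le
  have hsummable : Summable (fun n => a n / b n) :=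
    (summable_geometric_two' _).of_nonneg_of_le (fun n => div_nonneg (ha n) (hb n).le) hbound
  refine ⟨hsummable, ?_⟩
  calc ∑' n, a n / b n ≤ ∑' n : ℕ, 1 / 2 / 2 / 2 ^ n :=
        hsummable.tsum_le_tsum hbound (summable_geometric_two' _)
    _ < 1 := by rw [tsum_geometric_two']; norm_num

theorem stmt_13_general (ζ : ℕ → ℂ) (R : ℕ → ℝ) (hR : ∀ ν, 0 < R ν)
    (hdisj : ∀ μ ν : ℕ, μ ≠ ν → Disjoint (ball (ζ μ) (R μ)) (ball (ζ ν) (R ν))) :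
    ∃ r : ℕ → ℝ, (∀ ν : ℕ, 1 ≤ ν → 0 < r ν ∧ r ν < R ν) ∧
      Summable (fun ν : ℕ =>
        Real.log ((R 0)⁻¹ * (R (ν + 1))⁻¹ * (‖ζ (ν + 1) - ζ 0‖ + R 0) *
            (‖ζ (ν + 1) - ζ 0‖ + R (ν + 1))) /
          Real.log ((R 0)⁻¹ * (r (ν + 1))⁻¹ * (‖ζ (ν + 1) - ζ 0‖ + R 0) *
            (‖ζ (ν + 1) - ζ 0‖ - r (ν + 1)))) ∧
      (∑' ν : ℕ,
        Real.log ((R 0)⁻¹ * (R (ν + 1))⁻¹ * (‖ζ (ν + 1) - ζ 0‖ + R 0) *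
            (‖ζ (ν + 1) - ζ 0‖ + R (ν + 1))) /
          Real.log ((R 0)⁻¹ * (r (ν + 1))⁻¹ * (‖ζ (ν + 1) - ζ 0‖ + R 0) *
            (‖ζ (ν + 1) - ζ 0‖ - r (ν + 1)))) < 1 := by
  have hdist : ∀ n, R (n + 1) + R 0 ≤ ‖ζ (n + 1) - ζ 0‖ := fun n => by
    simpa [dist_eq_norm] using
      (disjoint_ball_ball_iff (hR (n + 1)) (hR 0)).mp (hdisj (n + 1) 0 n.succ_ne_zero)
  have hd : ∀ n, 0 < ‖ζ (n + 1) - ζ 0‖ := fun n =>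
    (add_pos (hR (n + 1)) (hR 0)).trans_le (hdist n)
  have hnum := fun n => log_inv_mul_inv_mul_add_mul_add_nonneg (hR 0) (hR (n + 1)) (hd n).le
  choose f hf hlt using fun n => exists_mem_Ioo_lt_log_inv_mul_inv_mul_add_mul_sub (hR 0)
    (hR (n + 1)) (hd n) (2 ^ (n + 2) * Real.log ((R 0)⁻¹ * (R (n + 1))⁻¹ *
      (‖ζ (n + 1) - ζ 0‖ + R 0) * (‖ζ (n + 1) - ζ 0‖ + R (n + 1))))
  refine ⟨fun ν => f (ν - 1), fun ν hν => ?_, summable_div_and_tsum_div_lt_one hnum hlt⟩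
  obtain ⟨n, rfl⟩ := Nat.exists_eq_add_of_le' hν
  exact hf n

/-- Given a locally finite sequence of pairwise disjoint open disks
`Δ(ζ_ν; R_ν)` in `ℂ`, there exist radii `r_ν ∈ (0, R_ν)` (for `ν ≥ 1`) such that the
series of ratios of logarithms is (summable and) less than `1`. -/
theorem stmt_13 (ζ : ℕ → ℂ) (R : ℕ → ℝ) (hR : ∀ ν, 0 < R ν)
    (hdisj : ∀ μ ν : ℕ, μ ≠ ν → Disjoint (ball (ζ μ) (R μ)) (ball (ζ ν) (R ν)))
    (hlocfin : ∀ K : Set ℂ, IsCompact K → {ν : ℕ | (ball (ζ ν) (R ν) ∩ K).Nonempty}.Finite) :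
    ∃ r : ℕ → ℝ, (∀ ν : ℕ, 1 ≤ ν → 0 < r ν ∧ r ν < R ν) ∧
      Summable (fun ν : ℕ =>
        Real.log ((R 0)⁻¹ * (R (ν + 1))⁻¹ * (‖ζ (ν + 1) - ζ 0‖ + R 0) *
            (‖ζ (ν + 1) - ζ 0‖ + R (ν + 1))) /
          Real.log ((R 0)⁻¹ * (r (ν + 1))⁻¹ * (‖ζ (ν + 1) - ζ 0‖ + R 0) *
            (‖ζ (ν + 1) - ζ 0‖ - r (ν + 1)))) ∧
      (∑' ν : ℕ,
        Real.log ((R 0)⁻¹ * (R (ν + 1))⁻¹ * (‖ζ (ν + 1) - ζ 0‖ + R 0) *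
            (‖ζ (ν + 1) - ζ 0‖ + R (ν + 1))) /
          Real.log ((R 0)⁻¹ * (r (ν + 1))⁻¹ * (‖ζ (ν + 1) - ζ 0‖ + R 0) *
            (‖ζ (ν + 1) - ζ 0‖ - r (ν + 1)))) < 1 :=
  stmt_13_general ζ R hR hdisj
end

section
/- Fix disjoint disks Δ(ζ₀;R₀) and Δ(ζ_ν;R_ν) in ℂ with |ζ_ν − ζ₀| ≥ R_ν + R₀, a radius 0 < r_ν < R_ν, and let C_ν = log[R₀⁻¹ r_ν⁻¹ (|ζ_ν−ζ₀|+R₀)(|ζ_ν−ζ₀|−r_ν)] and α_ν(z) = C_ν⁻¹ log[ (|z−ζ₀|/|z−ζ_ν|) · (|ζ_ν−ζ₀|+R₀)/R₀ ]. Then α_ν is harmonic on ℂ \ {ζ₀, ζ_ν}, nonnegative on ℂ \ (Δ(ζ₀;R₀) ∪ Δ(ζ_ν;r_ν)), α_ν ≥ 1 on ∂Δ(ζ_ν;r_ν), and α_ν ≤ B_ν/C_ν on ℂ \ (Δ(ζ₀;R₀) ∪ Δ(ζ_ν;R_ν)), where B_ν = log[R₀⁻¹ R_ν⁻¹ (|ζ_ν−ζ₀|+R₀)(|ζ_ν−ζ₀|+R_ν)].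 -/
/-!
Near `z ≠ a`, `log ‖w - a‖` is the real part of the holomorphic branch
`log ((w - a) / (z - a)) + log ‖z - a‖`, so `α_ν` is harmonic off `{ζ₀, ζ_ν}`. Since
`C_ν > 0`, the three bounds are inequalities between the arguments of the logarithms, and
each is one triangle inequality for `z`, `ζ₀`, `ζ_ν` combined with the constraint on `z`.
-/

open Complex Metric

/-- A real-valued function is harmonic on a subset of `ℂ` if it is locally the real part
of a holomorphic function there. -/
def IsHarmonicOn (f : ℂ → ℝ) (s : Set ℂ) : Prop :=
  ∀ z ∈ s, ∃ U ∈ nhds z, U ⊆ s ∧ ∃ g : ℂ → ℂ, DifferentiableOn ℂ g U ∧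
    ∀ w ∈ U, f w = (g w).re

namespace IsHarmonicOn

variable {f g : ℂ → ℝ} {s t : Set ℂ}

theorem congr (hf : IsHarmonicOn f s) (hfg : Set.EqOn f g s) : IsHarmonicOn g s := by
  intro z hz
  obtain ⟨U, hU, hUs, F, hF, hfF⟩ := hf z hz
  exact ⟨U, hU, hUs, F, hF, fun w hw => (hfg (hUs hw)).symm.trans (hfF w hw)⟩

theorem mono (hf : IsHarmonicOn f s) (ht : IsOpen t) (hts : t ⊆ s) : IsHarmonicOn f t := by
  intro z hz
  obtain ⟨U, hU, -, F, hF, hfF⟩ := hf z (hts hz)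
  exact ⟨U ∩ t, Filter.inter_mem hU (ht.mem_nhds hz), Set.inter_subset_right, F,
    hF.mono Set.inter_subset_left, fun w hw => hfF w hw.1⟩

theorem add (hf : IsHarmonicOn f s) (hg : IsHarmonicOn g s) :
    IsHarmonicOn (fun z => f z + g z) s := by
  intro z hz
  obtain ⟨U, hU, hUs, F, hF, hfF⟩ := hf z hz
  obtain ⟨V, hV, -, G, hG, hgG⟩ := hg z hz
  refine ⟨U ∩ V, Filter.inter_mem hU hV, Set.inter_subset_left.trans hUs, F + G,
    (hF.mono Set.inter_subset_left).add (hG.mono Set.inter_subset_right), fun w hw => ?_⟩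
  simp [hfF w hw.1, hgG w hw.2]

theorem const_mul (hf : IsHarmonicOn f s) (c : ℝ) : IsHarmonicOn (fun z => c * f z) s := by
  intro z hz
  obtain ⟨U, hU, hUs, F, hF, hfF⟩ := hf z hz
  exact ⟨U, hU, hUs, fun w => c * F w, hF.const_mul _, fun w hw => by simp [hfF w hw]⟩

theorem sub (hf : IsHarmonicOn f s) (hg : IsHarmonicOn g s) :
    IsHarmonicOn (fun z => f z - g z) s :=
  (hf.add (hg.const_mul (-1))).congr fun z _ => by simp [sub_eq_add_neg]

theorem add_const (hf : IsHarmonicOn f s) (c : ℝ) : IsHarmonicOn (fun z => f z + c) s := by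
  intro z hz
  obtain ⟨U, hU, hUs, F, hF, hfF⟩ := hf z hz
  exact ⟨U, hU, hUs, fun w => F w + c, hF.add_const _, fun w hw => by simp [hfF w hw]⟩

end IsHarmonicOn

theorem isHarmonicOn_log_norm_sub (a : ℂ) :
    IsHarmonicOn (fun z => Real.log ‖z - a‖) {a}ᶜ := by
  intro z hz
  have hza : z - a ≠ 0 := sub_ne_zero.2 hz
  set U := (fun w => (w - a) / (z - a)) ⁻¹' slitPlane
  have hUa : U ⊆ {a}ᶜ := by
    rintro w hw rfl
    simp [U] at hw
  refine ⟨U, (isOpen_slitPlane.preimage (by fun_prop)).mem_nhds (by simp [div_self hza]),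
    hUa, fun w => log ((w - a) / (z - a)) + Real.log ‖z - a‖,
    fun w hw => (((differentiableAt_log hw).comp (f := fun w => (w - a) / (z - a)) w
      (by fun_prop)).add_const _).differentiableWithinAt, fun w hw => ?_⟩
  have hwa : w - a ≠ 0 := sub_ne_zero.2 (hUa hw)
  simp only [add_re, log_re, ofReal_re, norm_div]
  rw [Real.log_div (norm_ne_zero_iff.2 hwa) (norm_ne_zero_iff.2 hza)]
  ring

theorem isHarmonicOn_mul_log_norm_div_mul (a b : ℂ) (c : ℝ) {K : ℝ} (hK : K ≠ 0) :
    IsHarmonicOn (fun z => c * Real.log (‖z - a‖ / ‖z - b‖ * K)) {a, b}ᶜ := by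
  have hopen : IsOpen ({a, b}ᶜ : Set ℂ) := (Set.toFinite _).isClosed.isOpen_compl
  have ha := (isHarmonicOn_log_norm_sub a).mono hopen (by simp)
  have hb := (isHarmonicOn_log_norm_sub b).mono hopen
    (Set.compl_subset_compl.2 (by simp))
  refine (((ha.sub hb).add_const (Real.log K)).const_mul c).congr fun z hz => ?_
  simp only [Set.mem_compl_iff, Set.mem_insert_iff, Set.mem_singleton_iff, not_or] at hz
  have hza : ‖z - a‖ ≠ 0 := norm_ne_zero_iff.2 (sub_ne_zero.2 hz.1)
  have hzb : ‖z - b‖ ≠ 0 := norm_ne_zero_iff.2 (sub_ne_zero.2 hz.2)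
  dsimp only
  rw [Real.log_mul (div_ne_zero hza hzb) hK, Real.log_div hza hzb]

theorem one_lt_inv_mul_inv_mul_add_mul_sub {R r d : ℝ} (hR : 0 < R) (hr : 0 < r)
    (hd : r + R ≤ d) : 1 < R⁻¹ * r⁻¹ * (d + R) * (d - r) := by
  rw [show R⁻¹ * r⁻¹ * (d + R) * (d - r) = (d + R) * (d - r) / (R * r) by field_simp,
    one_lt_div (by positivity)]
  nlinarith

section DistanceRatio

variable {a b z : ℂ} {R r : ℝ}

theorem one_le_norm_sub_div_norm_sub_mul (hR : 0 < R) (hz : R ≤ ‖z - a‖) (hzb : z ≠ b) :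
    1 ≤ ‖z - a‖ / ‖z - b‖ * ((‖b - a‖ + R) / R) := by
  have hzb' : 0 < ‖z - b‖ := norm_pos_iff.2 (sub_ne_zero.2 hzb)
  have htri : ‖z - b‖ ≤ ‖z - a‖ + ‖b - a‖ := by
    simpa [norm_sub_rev a b] using norm_sub_le_norm_sub_add_norm_sub z a b
  rw [div_mul_div_comm, one_le_div (by positivity)]
  nlinarith [mul_le_mul_of_nonneg_left hz (norm_nonneg (b - a))]

theorem inv_mul_inv_mul_add_mul_sub_le_of_norm_eq (hR : 0 < R) (hr : 0 < r)
    (hz : ‖z - b‖ = r) :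
    R⁻¹ * r⁻¹ * (‖b - a‖ + R) * (‖b - a‖ - r) ≤ ‖z - a‖ / ‖z - b‖ * ((‖b - a‖ + R) / R) := by
  have htri : ‖b - a‖ ≤ ‖z - b‖ + ‖z - a‖ := by
    simpa [norm_sub_rev b z] using norm_sub_le_norm_sub_add_norm_sub b z a
  rw [hz, show R⁻¹ * r⁻¹ * (‖b - a‖ + R) * (‖b - a‖ - r) = (‖b - a‖ - r) / r * ((‖b - a‖ + R) / R)
    by field_simp]
  gcongr
  linarith

theorem norm_sub_div_norm_sub_mul_le (hR : 0 < R) (hr : 0 < r) (hz : r ≤ ‖z - b‖) :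
    ‖z - a‖ / ‖z - b‖ * ((‖b - a‖ + R) / R) ≤ R⁻¹ * r⁻¹ * (‖b - a‖ + R) * (‖b - a‖ + r) := by
  have hzb : 0 < ‖z - b‖ := hr.trans_le hz
  have htri : ‖z - a‖ ≤ ‖z - b‖ + ‖b - a‖ := norm_sub_le_norm_sub_add_norm_sub z b a
  calc ‖z - a‖ / ‖z - b‖ * ((‖b - a‖ + R) / R)
      ≤ (1 + ‖b - a‖ / ‖z - b‖) * ((‖b - a‖ + R) / R) := by
        gcongr
        rw [one_add_div hzb.ne', div_le_div_iff_of_pos_right hzb]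
        exact htri
    _ ≤ (1 + ‖b - a‖ / r) * ((‖b - a‖ + R) / R) := by gcongr
    _ = R⁻¹ * r⁻¹ * (‖b - a‖ + R) * (‖b - a‖ + r) := by field_simp; ring

end DistanceRatio

/-- For disjoint disks `Δ(ζ₀;R₀)`, `Δ(ζ_ν;R_ν)` and `0 < r_ν < R_ν`, the
function `α_ν(z) = C_ν⁻¹ log[(|z−ζ₀|/|z−ζ_ν|)·(|ζ_ν−ζ₀|+R₀)/R₀]` is harmonic off
`{ζ₀, ζ_ν}`, nonnegative off `Δ(ζ₀;R₀) ∪ Δ(ζ_ν;r_ν)`, at least `1` on `∂Δ(ζ_ν;r_ν)`,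
and at most `B_ν/C_ν` off `Δ(ζ₀;R₀) ∪ Δ(ζ_ν;R_ν)`. -/
theorem stmt_14 (ζ₀ ζν : ℂ) (R₀ Rν rν : ℝ) (hR₀ : 0 < R₀) (hRν : 0 < Rν)
    (hrν : 0 < rν) (hrR : rν < Rν) (hsep : Rν + R₀ ≤ ‖ζν - ζ₀‖) :
    let Cν : ℝ := Real.log (R₀⁻¹ * rν⁻¹ * (‖ζν - ζ₀‖ + R₀) * (‖ζν - ζ₀‖ - rν))
    let Bν : ℝ := Real.log (R₀⁻¹ * Rν⁻¹ * (‖ζν - ζ₀‖ + R₀) * (‖ζν - ζ₀‖ + Rν))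
    let αν : ℂ → ℝ := fun z =>
      Cν⁻¹ * Real.log ((‖z - ζ₀‖ / ‖z - ζν‖) * ((‖ζν - ζ₀‖ + R₀) / R₀))
    IsHarmonicOn αν ({ζ₀, ζν}ᶜ) ∧
      (∀ z ∈ (ball ζ₀ R₀ ∪ ball ζν rν)ᶜ, 0 ≤ αν z) ∧
      (∀ z ∈ sphere ζν rν, 1 ≤ αν z) ∧
      (∀ z ∈ (ball ζ₀ R₀ ∪ ball ζν Rν)ᶜ, αν z ≤ Bν / Cν) := by
  intro Cν Bν αν
  have hC : 0 < Cν := Real.log_pos (one_lt_inv_mul_inv_mul_add_mul_sub hR₀ hrν (by linarith))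
  refine ⟨isHarmonicOn_mul_log_norm_div_mul ζ₀ ζν _ (by positivity), fun z hz => ?_,
    fun z hz => ?_, fun z hz => ?_⟩
  all_goals simp only [Set.mem_compl_iff, Set.mem_union, mem_ball_iff_norm, mem_sphere_iff_norm,
    not_or, not_lt] at hz
  · exact mul_nonneg (inv_nonneg.2 hC.le) (Real.log_nonneg
      (one_le_norm_sub_div_norm_sub_mul hR₀ hz.1 (by rintro rfl; simp at hz; linarith)))
  · refine (one_le_inv_mul₀ hC).2 (Real.log_le_log ?_
      (inv_mul_inv_mul_add_mul_sub_le_of_norm_eq hR₀ hrν hz))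
    exact (one_lt_inv_mul_inv_mul_add_mul_sub hR₀ hrν (by linarith)).trans' one_pos
  · rw [div_eq_inv_mul]
    refine mul_le_mul_of_nonneg_left (Real.log_le_log ?_
      (norm_sub_div_norm_sub_mul_le hR₀ hRν hz.2)) (inv_nonneg.2 hC.le)
    have := hR₀.trans_le hz.1
    have := hRν.trans_le hz.2
    positivity
end

section
/- Let Υ : M̂ → M be a connected covering space of a connected noncompact manifold M, let E be an end of M̂ (a connected component with noncompact closure of the complement of a compact set, with compact boundary ∂E), and suppose E₀ := Υ(E) ≠ M. Then the restriction Υ|_{cl(E)} : cl(E) → cl(E₀) is a proper surjective map, ∂E₀ = Υ(∂E) \ E₀ is compact, and E₀ is an end of M. -/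
/-!
Over a small compact connected neighbourhood `V` of a point of `M`, the cover is a disjoint union
of sheets `sheet V i ≅ V`. A sheet meeting `cl E` either lies in `E` or meets the compact set
`∂E`, and only finitely many sheets meet `∂E`. Hence the number of points of `E` over `y` is
finite for all `y ∈ V` or for none; `M` being connected and some fibre of `E` being empty, all
fibres of `E` are finite, so `cl E ∩ Υ⁻¹(V)` is a finite union of compact sheets. Thus `Υ`
restricted to `cl E` is proper, hence closed, and `Υ(cl E) = cl E₀`; the remaining claims
follow from `cl E = E ∪ ∂E`.
-/

open Set Topology Filter Bundle

section

variable {X : Type*} [TopologicalSpace X]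

theorem IsPreconnected.subset_or_inter_frontier_nonempty {S E : Set X} (hS : IsPreconnected S)
    (hE : IsOpen E) (h : (S ∩ closure E).Nonempty) : S ⊆ E ∨ (S ∩ frontier E).Nonempty := by
  rw [or_iff_not_imp_right, not_nonempty_iff_eq_empty]
  intro hfr
  have hcl : S ∩ closure E ⊆ E := by
    rw [closure_eq_self_union_frontier, inter_union_distrib_left, hfr, union_empty]
    exact inter_subset_right
  obtain ⟨z, hz⟩ := h
  exact hS.subset_of_closure_inter_subset hE ⟨z, hz.1, hcl hz⟩ (inter_comm S _ ▸ hcl)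

theorem frontier_connectedComponentIn_compl_subset [LocallyConnectedSpace X] {L : Set X}
    (hL : IsClosed L) (x : X) : frontier (connectedComponentIn Lᶜ x) ⊆ L := by
  intro z hz
  by_contra hzL
  have hN : connectedComponentIn Lᶜ z ∈ 𝓝 z :=
    hL.isOpen_compl.connectedComponentIn.mem_nhds (mem_connectedComponentIn hzL)
  obtain ⟨w, hwz, hwx⟩ := mem_closure_iff_nhds.1 (frontier_subset_closure hz) _ hN
  have hzx : z ∈ connectedComponentIn Lᶜ x := by
    rw [connectedComponentIn_eq hwx, ← connectedComponentIn_eq hwz]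
    exact mem_connectedComponentIn hzL
  exact (hL.isOpen_compl.connectedComponentIn.inter_frontier_eq).subset ⟨hzx, hz⟩

theorem IsOpen.eq_connectedComponentIn_compl_frontier {s : Set X} (hs : IsOpen s)
    (hsc : IsPreconnected s) {x : X} (hx : x ∈ s) :
    s = connectedComponentIn (frontier s)ᶜ x := by
  have hsub : s ⊆ (frontier s)ᶜ := (disjoint_frontier_iff_isOpen.2 hs).subset_compl_left
  refine (hsc.subset_connectedComponentIn hx hsub).antisymm ?_
  refine isPreconnected_connectedComponentIn.subset_of_closure_inter_subset hs
    ⟨x, mem_connectedComponentIn (hsub hx), hx⟩ ?_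
  rintro y ⟨hy, hyc⟩
  by_contra hys
  exact connectedComponentIn_subset _ _ hyc (hs.frontier_eq ▸ ⟨hy, hys⟩)

theorem exists_isCompact_isPreconnected_mem_nhds_subset [T2Space X] [LocallyCompactSpace X]
    [LocallyConnectedSpace X] {x : X} {s : Set X} (hs : s ∈ 𝓝 x) :
    ∃ V ∈ 𝓝 x, V ⊆ s ∧ IsCompact V ∧ IsPreconnected V := by
  obtain ⟨K, hK, hKs, hKc⟩ := local_compact_nhds hs
  have hU : connectedComponentIn (interior K) x ∈ 𝓝 x :=
    isOpen_interior.connectedComponentIn.mem_nhds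
      (mem_connectedComponentIn (mem_interior_iff_mem_nhds.2 hK))
  have hUK : closure (connectedComponentIn (interior K) x) ⊆ K :=
    closure_minimal ((connectedComponentIn_subset _ _).trans interior_subset) hKc.isClosed
  exact ⟨_, mem_of_superset hU subset_closure, hUK.trans hKs,
    hKc.of_isClosed_subset isClosed_closure hUK, isPreconnected_connectedComponentIn.closure⟩

theorem isCompact_inter_preimage_of_forall_mem_nhds {Y : Type*} [TopologicalSpace Y]
    [T2Space Y] {f : X → Y} (hf : Continuous f) {A : Set X} (hA : IsClosed A)
    (h : ∀ y, ∃ V ∈ 𝓝 y, IsCompact (A ∩ f ⁻¹' V)) {C : Set Y} (hC : IsCompact C) :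
    IsCompact (A ∩ f ⁻¹' C) := by
  choose V hV hVc using h
  obtain ⟨s, -, hs⟩ := hC.elim_nhds_subcover V fun y _ => hV y
  refine (s.finite_toSet.isCompact_biUnion fun y _ => hVc y).of_isClosed_subset
    (hA.inter (hC.isClosed.preimage hf)) ?_
  rintro z ⟨hzA, hzC⟩
  obtain ⟨y, hy, hzy⟩ := mem_iUnion₂.1 (hs hzC)
  exact mem_biUnion hy ⟨hzA, hzy⟩

theorem isClosed_image_of_forall_isCompact_inter_preimage {Y : Type*} [TopologicalSpace Y]
    [T2Space Y] [CompactlyGeneratedSpace Y] {f : X → Y} (hf : Continuous f) {A : Set X}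
    (h : ∀ C, IsCompact C → IsCompact (A ∩ f ⁻¹' C)) : IsClosed (f '' A) :=
  CompactlyGeneratedSpace.isClosed fun C hC =>
    image_inter_preimage f A C ▸ ((h C hC).image hf).isClosed

end

namespace Bundle.Trivialization

variable {Z B F : Type*} [TopologicalSpace Z] [TopologicalSpace B] [TopologicalSpace F]
  {proj : Z → B} (t : Trivialization F proj) {V : Set B}

def sheet (V : Set B) (i : F) : Set Z :=
  (fun b => t.toOpenPartialHomeomorph.symm (b, i)) '' V

theorem mem_sheet_iff (hV : V ⊆ t.baseSet) {z : Z} {i : F} :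
    z ∈ t.sheet V i ↔ proj z ∈ V ∧ (t z).2 = i := by
  constructor
  · rintro ⟨b, hb, rfl⟩
    rw [t.proj_symm_apply' (hV hb), t.apply_symm_apply' (hV hb)]
    exact ⟨hb, rfl⟩
  · rintro ⟨hz, rfl⟩
    exact ⟨proj z, hz, t.symm_apply_mk_proj (t.mem_source.2 (hV hz))⟩

theorem isCompact_sheet (hV : V ⊆ t.baseSet) (hVc : IsCompact V) (i : F) :
    IsCompact (t.sheet V i) :=
  hVc.image_of_continuousOn (t.continuousOn_symm_prodMk_left.mono hV)

theorem isPreconnected_sheet (hV : V ⊆ t.baseSet) (hVp : IsPreconnected V) (i : F) :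
    IsPreconnected (t.sheet V i) :=
  hVp.image _ (t.continuousOn_symm_prodMk_left.mono hV)

theorem finite_setOf_sheet_inter_nonempty [DiscreteTopology F] (hproj : Continuous proj)
    (hV : V ⊆ t.baseSet) (hVcl : IsClosed V) {K : Set Z} (hK : IsCompact K) :
    {i | (t.sheet V i ∩ K).Nonempty}.Finite := by
  have hKV : IsCompact (K ∩ proj ⁻¹' V) := hK.inter_right (hVcl.preimage hproj)
  have hsnd : ContinuousOn (fun z => (t z).2) (K ∩ proj ⁻¹' V) :=
    continuous_snd.comp_continuousOn
      (t.toOpenPartialHomeomorph.continuousOn.mono fun z hz => t.mem_source.2 (hV hz.2))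
  refine (hKV.image_of_continuousOn hsnd).finite_of_discrete.subset ?_
  rintro i ⟨z, hzS, hzK⟩
  obtain ⟨hzV, rfl⟩ := (t.mem_sheet_iff hV).1 hzS
  exact ⟨z, ⟨hzK, hzV⟩, rfl⟩

variable {E : Set Z}

theorem closure_inter_preimage_subset_biUnion_sheet (hV : V ⊆ t.baseSet)
    (hVp : IsPreconnected V) (hE : IsOpen E) :
    closure E ∩ proj ⁻¹' V ⊆
      ⋃ i ∈ {i | t.sheet V i ⊆ E} ∪ {i | (t.sheet V i ∩ frontier E).Nonempty},
        t.sheet V i := by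
  rintro z ⟨hzE, hzV⟩
  have hz : z ∈ t.sheet V (t z).2 := (t.mem_sheet_iff hV).2 ⟨hzV, rfl⟩
  exact mem_biUnion
    ((t.isPreconnected_sheet hV hVp _).subset_or_inter_frontier_nonempty hE ⟨z, hz, hzE⟩) hz

theorem finite_inter_preimage_singleton_iff (hV : V ⊆ t.baseSet) (hVp : IsPreconnected V)
    (hE : IsOpen E) (hfr : {i | (t.sheet V i ∩ frontier E).Nonempty}.Finite) {b : B}
    (hb : b ∈ V) : (E ∩ proj ⁻¹' {b}).Finite ↔ {i | t.sheet V i ⊆ E}.Finite := by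
  constructor
  · refine fun hfin => (hfin.image fun z => (t z).2).subset fun i hi => ?_
    exact ⟨t.toOpenPartialHomeomorph.symm (b, i),
      ⟨hi (mem_image_of_mem _ hb), t.proj_symm_apply' (hV hb)⟩,
      by simp only [t.apply_symm_apply' (hV hb)]⟩
  · refine fun hfin =>
      ((hfin.union hfr).image fun i => t.toOpenPartialHomeomorph.symm (b, i)).subset ?_
    rintro z ⟨hzE, rfl⟩
    obtain ⟨i, hi, hzi⟩ := mem_iUnion₂.1
      (t.closure_inter_preimage_subset_biUnion_sheet hV hVp hE ⟨subset_closure hzE, hb⟩)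
    obtain ⟨-, rfl⟩ := (t.mem_sheet_iff hV).1 hzi
    exact ⟨_, hi, t.symm_apply_mk_proj (t.mem_source.2 (hV hb))⟩

theorem isCompact_closure_inter_preimage (hproj : Continuous proj) (hV : V ⊆ t.baseSet)
    (hVc : IsCompact V) (hVcl : IsClosed V) (hVp : IsPreconnected V) (hE : IsOpen E)
    (hfr : {i | (t.sheet V i ∩ frontier E).Nonempty}.Finite)
    (hfin : {i | t.sheet V i ⊆ E}.Finite) : IsCompact (closure E ∩ proj ⁻¹' V) :=
  ((hfin.union hfr).isCompact_biUnion fun i _ => t.isCompact_sheet hV hVc i).of_isClosed_subset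
    (isClosed_closure.inter (hVcl.preimage hproj))
    (t.closure_inter_preimage_subset_biUnion_sheet hV hVp hE)

end Bundle.Trivialization

namespace IsCoveringMap

variable {X M : Type*} [TopologicalSpace X] [TopologicalSpace M] {p : X → M}

theorem surjective [ConnectedSpace M] [Nonempty X] (hp : IsCoveringMap p) :
    Function.Surjective p := by
  have hclosed : IsClosed (range p) := by
    refine isOpen_compl_iff.1 (isOpen_iff_forall_mem_open.2 fun y hy => ?_)
    obtain ⟨-, U, hyU, hUo, -, H, -⟩ := hp y
    refine ⟨U, ?_, hUo, hyU⟩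
    rintro _ hzU ⟨z, rfl⟩
    obtain ⟨w, hw⟩ := (H ⟨z, hzU⟩).2
    exact hy ⟨w, hw⟩
  exact range_eq_univ.1
    (IsClopen.eq_univ ⟨hclosed, hp.isOpenMap.isOpen_range⟩ (range_nonempty p))

theorem exists_trivialization_isCompact_isPreconnected [T2Space M] [LocallyCompactSpace M]
    [LocallyConnectedSpace M] (hp : IsCoveringMap p) (hsurj : Function.Surjective p) (y : M) :
    ∃ t : Trivialization (p ⁻¹' {y}) p, ∃ V ∈ 𝓝 y,
      V ⊆ t.baseSet ∧ IsCompact V ∧ IsPreconnected V := by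
  obtain ⟨x, rfl⟩ := hsurj y
  have : Nonempty (p ⁻¹' {p x}) := ⟨⟨x, rfl⟩⟩
  let t := (hp (p x)).toTrivialization
  exact ⟨t, exists_isCompact_isPreconnected_mem_nhds_subset
    (t.open_baseSet.mem_nhds (hp (p x)).mem_toTrivialization_baseSet)⟩

theorem isCompact_closure_inter_preimage [T2Space M] [LocallyCompactSpace M]
    [LocallyConnectedSpace M] [ConnectedSpace M] [Nonempty X] (hp : IsCoveringMap p)
    {E : Set X} (hE : IsOpen E) (hfr : IsCompact (frontier E)) (hne : p '' E ≠ univ)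
    {C : Set M} (hC : IsCompact C) : IsCompact (closure E ∩ p ⁻¹' C) := by
  choose t V hV hVt hVc hVp using hp.exists_trivialization_isCompact_isPreconnected hp.surjective
  have hsheets : ∀ y, {i | ((t y).sheet (V y) i ∩ frontier E).Nonempty}.Finite := fun y =>
    have := (hp y).1
    (t y).finite_setOf_sheet_inter_nonempty hp.continuous (hVt y) (hVc y).isClosed hfr
  have hfiber_iff := fun y {y'} (hy' : y' ∈ V y) =>
    (t y).finite_inter_preimage_singleton_iff (hVt y) (hVp y) hE (hsheets y) hy'
  have hlc : IsLocallyConstant fun y => (E ∩ p ⁻¹' {y}).Finite :=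
    (IsLocallyConstant.iff_eventually_eq _).2 fun y => mem_of_superset (hV y) fun y' hy' =>
      propext ((hfiber_iff y hy').trans (hfiber_iff y (mem_of_mem_nhds (hV y))).symm)
  obtain ⟨y₀, hy₀⟩ := ne_univ_iff_exists_notMem _ |>.1 hne
  have hfiber : ∀ y, (E ∩ p ⁻¹' {y}).Finite := fun y =>
    hlc.apply_eq_of_preconnectedSpace y₀ y ▸
      finite_empty.subset fun z hz => hy₀ ⟨z, hz.1, hz.2⟩
  refine isCompact_inter_preimage_of_forall_mem_nhds hp.continuous isClosed_closure
    (fun y => ⟨V y, hV y, ?_⟩) hC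
  exact (t y).isCompact_closure_inter_preimage hp.continuous (hVt y) (hVc y) (hVc y).isClosed
    (hVp y) hE (hsheets y) ((hfiber_iff y (mem_of_mem_nhds (hV y))).1 (hfiber y))

end IsCoveringMap

theorem stmt_17_general {n : ℕ} {Mhat M : Type} [TopologicalSpace M] [T2Space M]
    [ChartedSpace (EuclideanSpace ℝ (Fin n)) M] [ConnectedSpace M]
    [TopologicalSpace Mhat] [T2Space Mhat]
    [ChartedSpace (EuclideanSpace ℝ (Fin n)) Mhat]
    {Υ : Mhat → M} (hcov : IsCoveringMap Υ)
    {E : Set Mhat}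
    (hE : ∃ L : Set Mhat, IsCompact L ∧ (∃ x ∈ Lᶜ, E = connectedComponentIn Lᶜ x))
    (hEnc : ¬ IsCompact (closure E))
    (hne : Υ '' E ≠ Set.univ) :
    (∀ C : Set M, C ⊆ closure (Υ '' E) → IsCompact C → IsCompact (closure E ∩ Υ ⁻¹' C)) ∧
    Υ '' closure E = closure (Υ '' E) ∧
    frontier (Υ '' E) = Υ '' frontier E \ Υ '' E ∧
    IsCompact (frontier (Υ '' E)) ∧
    (∃ K : Set M, IsCompact K ∧ (∃ y ∈ Kᶜ, Υ '' E = connectedComponentIn Kᶜ y) ∧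
      ¬ IsCompact (closure (Υ '' E))) := by
  have := ChartedSpace.locallyCompactSpace (EuclideanSpace ℝ (Fin n)) M
  have := ChartedSpace.locallyConnectedSpace (EuclideanSpace ℝ (Fin n)) M
  have := ChartedSpace.locallyConnectedSpace (EuclideanSpace ℝ (Fin n)) Mhat
  obtain ⟨L, hL, x, hxL, hEL⟩ := hE
  have : Nonempty Mhat := ⟨x⟩
  have hEo : IsOpen E := hEL ▸ hL.isClosed.isOpen_compl.connectedComponentIn
  have hxE : x ∈ E := hEL ▸ mem_connectedComponentIn hxL
  have hfr : IsCompact (frontier E) := hL.of_isClosed_subset isClosed_frontier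
    (hEL ▸ frontier_connectedComponentIn_compl_subset hL.isClosed x)
  have hproper := fun C (hC : IsCompact C) => hcov.isCompact_closure_inter_preimage hEo hfr hne hC
  have hE₀o := hcov.isOpenMap E hEo
  have himage : Υ '' closure E = closure (Υ '' E) :=
    (image_closure_subset_closure_image hcov.continuous).antisymm <| closure_minimal
      (image_mono subset_closure)
      (isClosed_image_of_forall_isCompact_inter_preimage hcov.continuous hproper)
  have hfrontier : frontier (Υ '' E) = Υ '' frontier E \ Υ '' E := by
    rw [hE₀o.frontier_eq, ← himage, closure_eq_self_union_frontier, image_union,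
      union_sdiff_left]
  have hfrc : IsCompact (frontier (Υ '' E)) :=
    (hfr.image hcov.continuous).of_isClosed_subset isClosed_frontier (hfrontier ▸ sdiff_subset)
  have hE₀ : Υ '' E = connectedComponentIn (frontier (Υ '' E))ᶜ (Υ x) :=
    hE₀o.eq_connectedComponentIn_compl_frontier
      ((hEL ▸ isPreconnected_connectedComponentIn).image _ hcov.continuous.continuousOn)
      (mem_image_of_mem Υ hxE)
  refine ⟨fun C _ hC => hproper C hC, himage, hfrontier, hfrc, _, hfrc,
    ⟨Υ x, (disjoint_frontier_iff_isOpen.2 hE₀o).subset_compl_left (mem_image_of_mem Υ hxE),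
      hE₀⟩,
    fun h => hEnc ?_⟩
  rw [← inter_eq_self_of_subset_left (image_subset_iff.1 himage.le)]
  exact hproper _ h

/-- Let `Υ : M̂ → M` be a connected covering space of a connected noncompact
manifold `M`, let `E` be an end of `M̂` (a component with noncompact closure of the
complement of a compact set), and suppose `E₀ := Υ(E) ≠ M`.  Then `Υ` restricts to a
proper surjective map `cl(E) → cl(E₀)`, `∂E₀ = Υ(∂E) \ E₀` is compact, and `E₀` is an end
of `M`. -/
theorem stmt_17 {n : ℕ} {Mhat M : Type} [TopologicalSpace M] [T2Space M]
    [ChartedSpace (EuclideanSpace ℝ (Fin n)) M] [ConnectedSpace M] [NoncompactSpace M]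
    [TopologicalSpace Mhat] [T2Space Mhat]
    [ChartedSpace (EuclideanSpace ℝ (Fin n)) Mhat] [ConnectedSpace Mhat]
    {Υ : Mhat → M} (hcov : IsCoveringMap Υ)
    {E : Set Mhat}
    (hE : ∃ L : Set Mhat, IsCompact L ∧ (∃ x ∈ Lᶜ, E = connectedComponentIn Lᶜ x))
    (hEnc : ¬ IsCompact (closure E))
    (hne : Υ '' E ≠ Set.univ) :
    (∀ C : Set M, C ⊆ closure (Υ '' E) → IsCompact C → IsCompact (closure E ∩ Υ ⁻¹' C)) ∧
    Υ '' closure E = closure (Υ '' E) ∧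
    frontier (Υ '' E) = Υ '' frontier E \ Υ '' E ∧
    IsCompact (frontier (Υ '' E)) ∧
    (∃ K : Set M, IsCompact K ∧ (∃ y ∈ Kᶜ, Υ '' E = connectedComponentIn Kᶜ y) ∧
      ¬ IsCompact (closure (Υ '' E))) :=
  stmt_17_general (n := n) hcov hE hEnc hne
end
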